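/- Reliability increases maximally when the consistent-label probability of the new edge is 1 (Lemma 2 of the paper): let C = {R_1, …, R_m} be a partition of V with Connect_p(R_i) > 0 for every i and Disconnect_p(R_j, R_k) > 0 for all j < k, let e₀ ∉ E be an unordered pair of distinct elements of V, and define Rel'(w) over the edge set E ∪ {e₀} by Rel'(w) = Rel_{p[e₀↦w]}(C) if both elements of e₀ lie in one block of C, and Rel'(w) = Rel_{p[e₀↦1−w]}(C) if they lie in distinct blocks. Then Rel'(w) ≤ Rel'(1) for all w ∈ [0, 1]. -/
import Mathlib


open Finset
open scoped Classical

/-- Possible-world probability of the world `S` (subset of the crowdsourced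
edge set `A`) in an uncertain graph with edge probabilities `p`. -/
noncomputable def PW {E : Type*} [DecidableEq E] (A : Finset E) (p : E → ℝ)
    (S : Finset E) : ℝ :=
  (∏ e ∈ S, p e) * ∏ e ∈ A \ S, (1 - p e)

variable {V : Type*}

/-- Both endpoints of the unordered pair `e` lie in the cluster `R`. -/
def insideCluster (R : Finset V) (e : Sym2 V) : Prop := ∀ v ∈ e, v ∈ R

/-- One endpoint of `e` lies in `Rj` and the other in `Rk`. -/
def crossPair (Rj Rk : Finset V) (e : Sym2 V) : Prop :=
  ∃ u ∈ Rj, ∃ v ∈ Rk, e = s(u, v)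

/-- The graph with vertex set `R` and (YES-)edge set `S` is connected:
all records in `R` are joined by the edges of `S`. -/
def connOn (R : Finset V) (S : Finset (Sym2 V)) : Prop :=
  ∀ u ∈ R, ∀ v ∈ R, (SimpleGraph.fromEdgeSet (↑S : Set (Sym2 V))).Reachable u v

/-- Connectivity of a cluster `R`:  probability that in a possible world of the
subgraph induced by `R` all records of `R` are connected. -/
noncomputable def Connect [DecidableEq V] (A : Finset (Sym2 V)) (p : Sym2 V → ℝ)
    (R : Finset V) : ℝ :=
  ∑ S ∈ (A.filter (insideCluster R)).powerset,
    PW (A.filter (insideCluster R)) p S * (if connOn R S then 1 else 0)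

/-- Disconnectivity of a pair of disjoint clusters `Rj`, `Rk`. -/
noncomputable def Disconnect [DecidableEq V] (A : Finset (Sym2 V)) (p : Sym2 V → ℝ)
    (Rj Rk : Finset V) : ℝ :=
  if A.filter (crossPair Rj Rk) = ∅ then 0
  else 1 - ∏ e ∈ A.filter (crossPair Rj Rk), p e

/-- Reliability of the clustering `R = {R 0, …, R (m-1)}`. -/
noncomputable def Reliability [DecidableEq V] (A : Finset (Sym2 V)) (p : Sym2 V → ℝ)
    {m : ℕ} (R : Fin m → Finset V) : ℝ :=
  (∑ i, Real.log (Connect A p (R i))) +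
    ∑ i, ∑ j ∈ Finset.Ioi i, Real.log (Disconnect A p (R i) (R j))

set_option linter.unusedSectionVars false

section Aux
variable [DecidableEq V]

lemma PW_congr {E : Type*} [DecidableEq E] {A : Finset E} {p p' : E → ℝ}
    (h : ∀ e ∈ A, p e = p' e) {S : Finset E} (hS : S ⊆ A) :
    PW A p S = PW A p' S := by
  unfold PW
  congr 1
  · exact Finset.prod_congr rfl fun e heS => h e (hS heS)
  · exact Finset.prod_congr rfl fun e heS => by rw [h e (Finset.mem_sdiff.1 heS).1]

lemma PW_nonneg {E : Type*} [DecidableEq E] {A : Finset E} {p : E → ℝ}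
    (hp : ∀ e ∈ A, 0 ≤ p e ∧ p e ≤ 1) {S : Finset E} (hS : S ⊆ A) :
    0 ≤ PW A p S := by
  apply mul_nonneg
  · exact Finset.prod_nonneg fun e heS => (hp e (hS heS)).1
  · exact Finset.prod_nonneg fun e heS => by
      have := (hp e (Finset.mem_sdiff.1 heS).1).2; linarith

lemma update_eq_on {E : Type*} [DecidableEq E] {A : Finset E} {e₀ : E} (he : e₀ ∉ A)
    (p : E → ℝ) (q : ℝ) : ∀ e ∈ A, Function.update p e₀ q e = p e :=
  fun e heA => Function.update_of_ne (by rintro rfl; exact he heA) _ _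

lemma Connect_update {A : Finset (Sym2 V)} {e₀ : Sym2 V} (he : e₀ ∉ A)
    (p : Sym2 V → ℝ) (q : ℝ) (R : Finset V) :
    Connect A (Function.update p e₀ q) R = Connect A p R := by
  unfold Connect
  refine Finset.sum_congr rfl fun S hS => ?_
  rw [Finset.mem_powerset] at hS
  have h : ∀ e ∈ A.filter (insideCluster R), Function.update p e₀ q e = p e :=
    fun e heF => update_eq_on he p q e (Finset.mem_filter.1 heF).1
  rw [PW_congr h hS]

lemma Disconnect_update {A : Finset (Sym2 V)} {e₀ : Sym2 V} (he : e₀ ∉ A)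
    (p : Sym2 V → ℝ) (q : ℝ) (Rj Rk : Finset V) :
    Disconnect A (Function.update p e₀ q) Rj Rk = Disconnect A p Rj Rk := by
  unfold Disconnect
  rw [Finset.prod_congr rfl fun e heF =>
    update_eq_on he p q e (Finset.mem_filter.1 heF).1]

lemma Connect_insert_not_inside {A : Finset (Sym2 V)} {e₀ : Sym2 V} {R : Finset V}
    (hin : ¬ insideCluster R e₀) (p : Sym2 V → ℝ) :
    Connect (insert e₀ A) p R = Connect A p R := by
  unfold Connect
  rw [Finset.filter_insert, if_neg hin]

lemma Disconnect_insert_not_cross {A : Finset (Sym2 V)} {e₀ : Sym2 V} {Rj Rk : Finset V}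
    (hcr : ¬ crossPair Rj Rk e₀) (p : Sym2 V → ℝ) :
    Disconnect (insert e₀ A) p Rj Rk = Disconnect A p Rj Rk := by
  unfold Disconnect
  rw [Finset.filter_insert, if_neg hcr]

lemma Connect_insert_inside {A : Finset (Sym2 V)} {p : Sym2 V → ℝ}
    (hp : ∀ e ∈ A, 0 ≤ p e ∧ p e ≤ 1) {e₀ : Sym2 V} (he : e₀ ∉ A)
    {R : Finset V} (hin : insideCluster R e₀) :
    ∃ c : ℝ, 0 ≤ c ∧ ∀ q, Connect (insert e₀ A) (Function.update p e₀ q) R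
      = Connect A p R + q * c := by
  classical
  set F := A.filter (insideCluster R) with hF
  have hFA : F ⊆ A := Finset.filter_subset _ _
  have heF : e₀ ∉ F := fun h => he (hFA h)
  set C₁ : ℝ := ∑ S ∈ F.powerset, PW F p S * (if connOn R (insert e₀ S) then 1 else 0)
    with hC₁
  have hC₀ : Connect A p R =
      ∑ S ∈ F.powerset, PW F p S * (if connOn R S then 1 else 0) := rfl
  refine ⟨C₁ - Connect A p R, ?_, ?_⟩
  · rw [sub_nonneg, hC₀, hC₁]
    refine Finset.sum_le_sum fun S hS => ?_
    have hSF : S ⊆ F := Finset.mem_powerset.1 hS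
    refine mul_le_mul_of_nonneg_left ?_ (PW_nonneg (fun e heF' => hp e (hFA heF')) hSF)
    by_cases hco : connOn R S
    · rw [if_pos hco, if_pos]
      intro x hx y hy
      exact (hco x hx y hy).mono (SimpleGraph.fromEdgeSet_mono (by
        intro e heS
        simp only [Finset.coe_insert, Set.mem_insert_iff]
        exact Or.inr heS))
    · rw [if_neg hco]
      split <;> norm_num
  · intro q
    have hfilt : (insert e₀ A).filter (insideCluster R) = insert e₀ F := by
      rw [Finset.filter_insert, if_pos hin]
    unfold Connect
    rw [hfilt, Finset.sum_powerset_insert heF]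
    have h1 : ∀ S ∈ F.powerset,
        PW (insert e₀ F) (Function.update p e₀ q) S * (if connOn R S then 1 else 0)
        = (1 - q) * (PW F p S * (if connOn R S then 1 else 0)) := by
      intro S hS
      have hSF : S ⊆ F := Finset.mem_powerset.1 hS
      have heS : e₀ ∉ S := fun h => heF (hSF h)
      unfold PW
      rw [Finset.insert_sdiff_of_notMem _ heS,
        Finset.prod_insert (fun h => heF (Finset.mem_sdiff.1 h).1),
        Function.update_self,
        Finset.prod_congr rfl fun e heS' => update_eq_on heF p q e (hSF heS'),
        Finset.prod_congr rfl fun e heS' =>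
          (by rw [update_eq_on heF p q e (Finset.mem_sdiff.1 heS').1] :
            (1 : ℝ) - Function.update p e₀ q e = 1 - p e)]
      ring
    have h2 : ∀ S ∈ F.powerset,
        PW (insert e₀ F) (Function.update p e₀ q) (insert e₀ S) *
          (if connOn R (insert e₀ S) then 1 else 0)
        = q * (PW F p S * (if connOn R (insert e₀ S) then 1 else 0)) := by
      intro S hS
      have hSF : S ⊆ F := Finset.mem_powerset.1 hS
      have heS : e₀ ∉ S := fun h => heF (hSF h)
      unfold PW
      have hsd : insert e₀ F \ insert e₀ S = F \ S := by
        rw [Finset.insert_sdiff_insert]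
        ext x
        simp only [Finset.mem_sdiff, Finset.mem_insert, not_or]
        constructor
        · rintro ⟨hx, _, hx2⟩; exact ⟨hx, hx2⟩
        · rintro ⟨hx, hx2⟩; exact ⟨hx, fun h => heF (h ▸ hx), hx2⟩
      rw [hsd, Finset.prod_insert heS, Function.update_self,
        Finset.prod_congr rfl fun e heS' => update_eq_on heF p q e (hSF heS'),
        Finset.prod_congr rfl fun e heS' =>
          (by rw [update_eq_on heF p q e (Finset.mem_sdiff.1 heS').1] :
            (1 : ℝ) - Function.update p e₀ q e = 1 - p e)]
      ring
    rw [Finset.sum_congr rfl h1, Finset.sum_congr rfl h2, ← Finset.mul_sum,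
      ← Finset.mul_sum, ← hC₁, ← hC₀]
    ring

lemma Disconnect_insert_cross {A : Finset (Sym2 V)} (p : Sym2 V → ℝ)
    {e₀ : Sym2 V} (he : e₀ ∉ A) {Rj Rk : Finset V} (hcr : crossPair Rj Rk e₀) (q : ℝ) :
    Disconnect (insert e₀ A) (Function.update p e₀ q) Rj Rk
      = 1 - q * ∏ e ∈ A.filter (crossPair Rj Rk), p e := by
  classical
  have heF : e₀ ∉ A.filter (crossPair Rj Rk) := fun h => he (Finset.mem_filter.1 h).1
  unfold Disconnect
  rw [Finset.filter_insert, if_pos hcr, if_neg (Finset.insert_ne_empty _ _),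
    Finset.prod_insert heF, Function.update_self,
    Finset.prod_congr rfl fun e heF' =>
      update_eq_on heF (p := p) (q := q) e heF']

lemma insideCluster_mk_iff {R : Finset V} {u v : V} :
    insideCluster R s(u, v) ↔ u ∈ R ∧ v ∈ R := by
  constructor
  · intro h
    exact ⟨h u (by simp), h v (by simp)⟩
  · rintro ⟨h1, h2⟩ x hx
    rcases Sym2.mem_iff.1 hx with rfl | rfl <;> assumption

lemma crossPair_mk_cases {Rj Rk : Finset V} {u v : V}
    (h : crossPair Rj Rk s(u, v)) :
    (u ∈ Rj ∧ v ∈ Rk) ∨ (v ∈ Rj ∧ u ∈ Rk) := by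
  obtain ⟨a, ha, b, hb, hab⟩ := h
  rcases Sym2.eq_iff.1 hab with ⟨rfl, rfl⟩ | ⟨rfl, rfl⟩
  · exact Or.inl ⟨ha, hb⟩
  · exact Or.inr ⟨ha, hb⟩

end Aux

/-- Lemma 2 of the paper: reliability increases maximally when the new edge's
consistent-label probability equals 1.  The new edge `s(u,v)` either lies inside
one block of the clustering (consistent-label probability = YES-probability `w`)
or joins two distinct blocks (consistent-label probability = NO-probability,
so its YES-probability is `1 - w`). -/
theorem reliability_new_edge_max {V : Type*} [DecidableEq V] [Fintype V]
    (A : Finset (Sym2 V)) (hA : ∀ e ∈ A, ¬ e.IsDiag) (p : Sym2 V → ℝ)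
    (hp : ∀ e ∈ A, 0 ≤ p e ∧ p e ≤ 1)
    {m : ℕ} (R : Fin m → Finset V)
    (hdisj : ∀ i j, i ≠ j → Disjoint (R i) (R j))
    (hcover : ∀ x : V, ∃ i, x ∈ R i)
    (hconn : ∀ i, 0 < Connect A p (R i))
    (hdisc : ∀ i j, i < j → 0 < Disconnect A p (R i) (R j))
    (u v : V) (huv : u ≠ v) (he : s(u, v) ∉ A)
    (Rel' : ℝ → ℝ)
    (hRel' : ∀ w, Rel' w =
      Reliability (insert (s(u, v)) A)
        (Function.update p (s(u, v)) (if ∃ i, u ∈ R i ∧ v ∈ R i then w else 1 - w)) R) :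
    ∀ w ∈ Set.Icc (0 : ℝ) 1, Rel' w ≤ Rel' 1 := by
  intro w hw
  obtain ⟨hw0, hw1⟩ := hw
  have hblock : ∀ (i j : Fin m) (x : V), x ∈ R i → x ∈ R j → i = j := by
    intro i j x hxi hxj
    by_contra h
    exact Finset.disjoint_left.1 (hdisj i j h) hxi hxj
  rw [hRel' w, hRel' 1]
  by_cases hc : ∃ i, u ∈ R i ∧ v ∈ R i
  · -- inside case
    simp only [if_pos hc]
    obtain ⟨i₀, hui₀, hvi₀⟩ := hc
    unfold Reliability
    apply add_le_add
    · refine Finset.sum_le_sum fun i _ => ?_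
      by_cases hin : insideCluster (R i) s(u, v)
      · obtain ⟨c, hc0, hcf⟩ := Connect_insert_inside hp he hin
        rw [hcf w, hcf 1]
        have h0 := hconn i
        apply Real.log_le_log (by nlinarith)
        nlinarith
      · rw [Connect_insert_not_inside hin, Connect_insert_not_inside hin,
          Connect_update he, Connect_update he]
    · refine Finset.sum_le_sum fun i _ => Finset.sum_le_sum fun j hj => ?_
      have hij : i < j := Finset.mem_Ioi.1 hj
      have hncr : ¬ crossPair (R i) (R j) s(u, v) := by
        intro hcr
        rcases crossPair_mk_cases hcr with ⟨h1, h2⟩ | ⟨h1, h2⟩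
        · exact absurd ((hblock i i₀ u h1 hui₀).trans (hblock i₀ j v hvi₀ h2)) hij.ne
        · exact absurd ((hblock i i₀ v h1 hvi₀).trans (hblock i₀ j u hui₀ h2)) hij.ne
      rw [Disconnect_insert_not_cross hncr, Disconnect_insert_not_cross hncr,
        Disconnect_update he, Disconnect_update he]
  · -- cross case
    simp only [if_neg hc]
    unfold Reliability
    apply add_le_add
    · refine Finset.sum_le_sum fun i _ => ?_
      have hin : ¬ insideCluster (R i) s(u, v) := by
        intro hin
        obtain ⟨h1, h2⟩ := insideCluster_mk_iff.1 hin
        exact hc ⟨i, h1, h2⟩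
      rw [Connect_insert_not_inside hin, Connect_insert_not_inside hin,
        Connect_update he, Connect_update he]
    · refine Finset.sum_le_sum fun i _ => Finset.sum_le_sum fun j hj => ?_
      have hij : i < j := Finset.mem_Ioi.1 hj
      by_cases hcr : crossPair (R i) (R j) s(u, v)
      · rw [Disconnect_insert_cross p he hcr, Disconnect_insert_cross p he hcr]
        have hd := hdisc i j hij
        have hFne : A.filter (crossPair (R i) (R j)) ≠ ∅ := by
          intro hF
          rw [Disconnect, if_pos hF] at hd
          exact lt_irrefl _ hd
        have hprod1 : ∏ e ∈ A.filter (crossPair (R i) (R j)), p e < 1 := by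
          rw [Disconnect, if_neg hFne] at hd
          linarith
        have hprod0 : 0 ≤ ∏ e ∈ A.filter (crossPair (R i) (R j)), p e :=
          Finset.prod_nonneg fun e heF => (hp e (Finset.mem_filter.1 heF).1).1
        apply Real.log_le_log (by nlinarith) (by nlinarith)
      · rw [Disconnect_insert_not_cross hcr, Disconnect_insert_not_cross hcr,
          Disconnect_update he, Disconnect_update he]
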